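/- Let r ≥ 1 and m ≥ 2 be integers. Let P_d denote the space of complex polynomials of degree at most d, so H := (P_{m−1})^{⊕r} has dimension rm. Let δ : H^r → P_{r(m−1)} be the alternating r-multilinear map sending (s_1,…,s_r), with s_i = (s_{i,1},…,s_{i,r}) ∈ (P_{m−1})^{⊕r}, to the determinant of the r×r matrix whose (i,j) entry is the polynomial s_{i,j}. Then the induced linear map ⋀^r H → P_{r(m−1)} is surjective. (This is the determinant map d_E for E = 𝒪_{ℙ^1}(m−1)^{⊕r} on X = ℙ^1.) -/

import Mathlib

/-!
The decomposable vectors `v₁ ∧ ⋯ ∧ vᵣ` span `⋀^r H`, so the range of the induced map is the span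
of all the determinants `δ v`. A determinant of an `r × r` matrix whose entries have degree at
most `m - 1` has degree at most `r (m - 1)`; conversely every monomial `X ^ k` with
`k ≤ r (m - 1)` is the determinant of a diagonal matrix of monomials `X ^ eᵢ`, where
`k = ∑ eᵢ` with all `eᵢ ≤ m - 1`.
-/

open Module ExteriorAlgebra Polynomial

/-- The determinant of an `r × r` matrix of polynomials, as a `ℂ`-alternating map in the
rows. -/
noncomputable def detAlt (r : ℕ) :
    (Fin r → ℂ[X]) [⋀^Fin r]→ₗ[ℂ] ℂ[X] :=
  { (Matrix.detRowAlternating (R := ℂ[X]) (n := Fin r)).toMultilinearMap.restrictScalars ℂ with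
    map_eq_zero_of_eq' := fun v i j hij hne =>
      Matrix.detRowAlternating.map_eq_zero_of_eq v hij hne }

/-- The determinant map `δ : H^r → P_{r(m-1)}` for `H = (P_{m-1})^{⊕ r}`, sending
`(s_1, …, s_r)` to the determinant of the matrix with `(i,j)` entry `s_{i,j}`. -/
noncomputable def deltaDet (r m : ℕ) :
    (Fin r → (degreeLT ℂ m : Submodule ℂ ℂ[X])) [⋀^Fin r]→ₗ[ℂ] ℂ[X] :=
  (detAlt r).compLinearMap
    (LinearMap.pi fun j =>
      (degreeLT ℂ m : Submodule ℂ ℂ[X]).subtype.comp (LinearMap.proj j))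

theorem LinearMap.range_eq_span_range_of_comp_ιMulti {R M N : Type*} [CommRing R]
    [AddCommGroup M] [Module R M] [AddCommGroup N] [Module R N] {n : ℕ}
    (F : ⋀[R]^n M →ₗ[R] N) (f : M [⋀^Fin n]→ₗ[R] N)
    (hF : ∀ v, F (exteriorPower.ιMulti R n v) = f v) :
    LinearMap.range F = Submodule.span R (Set.range f) := by
  rw [LinearMap.range_eq_map, ← exteriorPower.ιMulti_span, Submodule.map_span,
    ← Set.range_comp, show ⇑F ∘ _ = ⇑f from funext hF]

theorem Polynomial.mem_degreeLT_succ_iff {R : Type*} [Semiring R] {p : R[X]} {n : ℕ} :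
    p ∈ degreeLT R (n + 1) ↔ p.natDegree ≤ n := by
  rw [degreeLT_succ_eq_degreeLE, mem_degreeLE, natDegree_le_iff_degree_le]

theorem Matrix.det_mem_degreeLT_succ {R n : Type*} [CommRing R] [Fintype n] [DecidableEq n]
    (A : Matrix n n R[X]) {d : ℕ} (hA : ∀ i j, A i j ∈ degreeLT R (d + 1)) :
    A.det ∈ degreeLT R (Fintype.card n * d + 1) := by
  simp only [mem_degreeLT_succ_iff] at hA ⊢
  rw [det_apply']
  refine natDegree_sum_le_of_forall_le _ _ fun σ _ => ?_
  calc (((Equiv.Perm.sign σ : ℤ) : R[X]) * ∏ i, A (σ i) i).natDegree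
      ≤ 0 + ∑ i, (A (σ i) i).natDegree :=
        (natDegree_mul_le).trans (add_le_add (natDegree_intCast _).le (natDegree_prod_le _ _))
    _ ≤ Fintype.card n * d := by
        simpa using Finset.sum_le_sum fun i (_ : i ∈ Finset.univ) => hA (σ i) i

theorem Nat.exists_fin_sum_eq_of_le_mul {d : ℕ} :
    ∀ {r k : ℕ}, k ≤ r * d → ∃ e : Fin r → ℕ, (∀ i, e i ≤ d) ∧ ∑ i, e i = k
  | 0, k, hk => ⟨0, fun _ => Nat.zero_le d, by simp_all⟩
  | r + 1, k, hk => by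
    obtain ⟨e, hed, he⟩ := exists_fin_sum_eq_of_le_mul (d := d) (r := r) (k := k - min k d)
      (by rw [Nat.succ_mul] at hk; omega)
    refine ⟨Fin.cons (min k d) e, Fin.cases (min_le_right k d) hed, ?_⟩
    rw [Fin.sum_cons, he]
    omega

theorem deltaDet_apply (r m : ℕ) (v : Fin r → Fin r → degreeLT ℂ m) :
    deltaDet r m v = (Matrix.of fun i j => (v i j : ℂ[X])).det := rfl

theorem span_range_deltaDet (r d : ℕ) :
    Submodule.span ℂ (Set.range (deltaDet r (d + 1))) = degreeLT ℂ (r * d + 1) := by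
  apply le_antisymm
  · rw [Submodule.span_le]
    rintro _ ⟨v, rfl⟩
    have := Matrix.det_mem_degreeLT_succ (Matrix.of fun i j => (v i j : ℂ[X])) fun i j => (v i j).2
    rwa [Fintype.card_fin] at this
  · classical
    rw [degreeLT_eq_span_X_pow, Finset.coe_image, Finset.coe_range, Submodule.span_le]
    rintro _ ⟨k, hk, rfl⟩
    obtain ⟨e, hed, he⟩ := Nat.exists_fin_sum_eq_of_le_mul (Nat.lt_succ_iff.1 hk)
    let v : Fin r → Fin r → degreeLT ℂ (d + 1) := fun i =>
      Pi.single i ⟨X ^ e i, mem_degreeLT_succ_iff.2 (by simpa using hed i)⟩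
    have hv : deltaDet r (d + 1) v = X ^ k := by
      have : (Matrix.of fun i j => (v i j : ℂ[X])) = Matrix.diagonal fun i => X ^ e i := by
        ext i j
        by_cases h : i = j <;> simp [v, Matrix.diagonal, Pi.single_apply, h, eq_comm]
      rw [deltaDet_apply, this, Matrix.det_diagonal, Finset.prod_pow_eq_pow_sum, he]
    exact Submodule.subset_span ⟨v, hv⟩

theorem induced_det_map_surjective_general (r m : ℕ) (hm : 2 ≤ m)
    (F : (⋀[ℂ]^r (Fin r → (degreeLT ℂ m : Submodule ℂ ℂ[X])) :
        Submodule ℂ (ExteriorAlgebra ℂ (Fin r → (degreeLT ℂ m : Submodule ℂ ℂ[X])))) →ₗ[ℂ]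
      ℂ[X])
    (hF : ∀ v : Fin r → (Fin r → (degreeLT ℂ m : Submodule ℂ ℂ[X])),
      F ⟨ExteriorAlgebra.ιMulti ℂ r v, ExteriorAlgebra.ιMulti_range ℂ r ⟨v, rfl⟩⟩ =
        deltaDet r m v) :
    LinearMap.range F = degreeLT ℂ (r * (m - 1) + 1) := by
  obtain ⟨d, rfl⟩ : ∃ d, m = d + 1 := ⟨m - 1, by omega⟩
  rw [LinearMap.range_eq_span_range_of_comp_ιMulti F _ hF, span_range_deltaDet,
    Nat.add_sub_cancel]

theorem induced_det_map_surjective (r m : ℕ) (hr : 1 ≤ r) (hm : 2 ≤ m)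
    (F : (⋀[ℂ]^r (Fin r → (degreeLT ℂ m : Submodule ℂ ℂ[X])) :
        Submodule ℂ (ExteriorAlgebra ℂ (Fin r → (degreeLT ℂ m : Submodule ℂ ℂ[X])))) →ₗ[ℂ]
      ℂ[X])
    (hF : ∀ v : Fin r → (Fin r → (degreeLT ℂ m : Submodule ℂ ℂ[X])),
      F ⟨ExteriorAlgebra.ιMulti ℂ r v, ExteriorAlgebra.ιMulti_range ℂ r ⟨v, rfl⟩⟩ =
        deltaDet r m v) :
    LinearMap.range F = degreeLT ℂ (r * (m - 1) + 1) :=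
  induced_det_map_surjective_general r m hm F hF
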